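/- arXiv:2102.07823 — 3 statements merged into one kernel-verified Lean document; each statement's English description precedes it below -/
import Mathlib

section
/- If I is a weakly J-ideal of a commutative ring R that is not a J-ideal, then I is contained in the nilradical N(R). -/
def IsWeaklyJIdeal {R : Type*} [CommRing R] (I : Ideal R) : Prop :=
  I ≠ ⊤ ∧ ∀ a b : R, a * b ∈ I → a * b ≠ 0 → a ∉ Ideal.jacobson (⊥ : Ideal R) → b ∈ I

def IsJIdeal {R : Type*} [CommRing R] (I : Ideal R) : Prop :=
  I ≠ ⊤ ∧ ∀ a b : R, a * b ∈ I → a ∉ Ideal.jacobson (⊥ : Ideal R) → b ∈ I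

/-!
If `I` is weakly J but not J, some `a ∉ J(R)`, `b ∉ I` have `a * b = 0`. Every `x ∈ I` lies in
`J(R)`, so `a + x ∉ J(R)` and `b + x ∉ I`; the weakly J property then forces the three products
`a (b + x)`, `(a + x) b`, `(a + x)(b + x)`, all of which lie in `I`, to vanish. Expanding gives
`x ^ 2 = 0`.
-/

namespace IsWeaklyJIdeal

variable {R : Type*} [CommRing R] {I : Ideal R}

theorem mul_eq_zero (h : IsWeaklyJIdeal I) {u v : R} (huv : u * v ∈ I)
    (hu : u ∉ Ideal.jacobson (⊥ : Ideal R)) (hv : v ∉ I) : u * v = 0 := by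
  by_contra hne
  exact hv (h.2 u v huv hne hu)

theorem le_jacobson (h : IsWeaklyJIdeal I) : I ≤ Ideal.jacobson (⊥ : Ideal R) := by
  intro x hx
  by_contra hxJ
  have hone : (1 : R) ∉ I := fun h1 ↦ h.1 (I.eq_top_of_isUnit_mem h1 isUnit_one)
  have hx0 : x = 0 := by simpa using h.mul_eq_zero (v := 1) (by simpa using hx) hxJ hone
  exact hxJ (hx0 ▸ Submodule.zero_mem _)

theorem exists_mul_eq_zero_of_not_isJIdeal (h : IsWeaklyJIdeal I) (hn : ¬ IsJIdeal I) :
    ∃ a b : R, a * b = 0 ∧ a ∉ Ideal.jacobson (⊥ : Ideal R) ∧ b ∉ I := by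
  simp only [IsJIdeal, h.1, ne_eq, not_false_eq_true, true_and, not_forall] at hn
  obtain ⟨a, b, hab, ha, hb⟩ := hn
  exact ⟨a, b, h.mul_eq_zero hab ha hb, ha, hb⟩

theorem sq_eq_zero_of_mul_eq_zero (h : IsWeaklyJIdeal I) {a b : R} (hab : a * b = 0)
    (ha : a ∉ Ideal.jacobson (⊥ : Ideal R)) (hb : b ∉ I) {x : R} (hx : x ∈ I) :
    x ^ 2 = 0 := by
  have hax : a + x ∉ Ideal.jacobson (⊥ : Ideal R) := by
    rwa [Ideal.add_mem_iff_left _ (h.le_jacobson hx)]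
  have hbx : b + x ∉ I := by rwa [Ideal.add_mem_iff_left _ hx]
  have h₁ : a * (b + x) = 0 :=
    h.mul_eq_zero (by rw [mul_add, hab, zero_add]; exact I.mul_mem_left a hx) ha hbx
  have h₂ : (a + x) * b = 0 :=
    h.mul_eq_zero (by rw [add_mul, hab, zero_add]; exact I.mul_mem_right b hx) hax hb
  have h₃ : (a + x) * (b + x) = 0 := by
    refine h.mul_eq_zero ?_ hax hbx
    have hsum : (a + x) * (b + x) = a * (b + x) + (a + x) * b - a * b + x * x := by ring
    rw [hsum, h₁, h₂, hab]
    simpa using I.mul_mem_left x hx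
  linear_combination h₃ - h₁ - h₂ + hab

end IsWeaklyJIdeal

theorem stmt5 {R : Type*} [CommRing R] (I : Ideal R)
    (h : IsWeaklyJIdeal I) (hn : ¬ IsJIdeal I) : I ≤ nilradical R := by
  obtain ⟨a, b, hab, ha, hb⟩ := h.exists_mul_eq_zero_of_not_isJIdeal hn
  exact fun x hx ↦ ⟨2, h.sq_eq_zero_of_mul_eq_zero hab ha hb hx⟩
end

section
/- In a reduced commutative ring, a non-zero proper ideal is a weakly J-ideal if and only if it is a J-ideal. -/
section

variable {R : Type*} [CommRing R] {I : Ideal R}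

theorem IsJIdeal.isWeaklyJIdeal (h : IsJIdeal I) : IsWeaklyJIdeal I :=
  ⟨h.1, fun a b hab _ ha => h.2 a b hab ha⟩

theorem IsWeaklyJIdeal.le_jacobson_s6 (h : IsWeaklyJIdeal I) : I ≤ Ideal.jacobson ⊥ := by
  intro x hx
  by_contra hxJ
  have hx0 : x ≠ 0 := fun hx0 => hxJ (hx0 ▸ Ideal.zero_mem _)
  exact h.1 ((Ideal.eq_top_iff_one I).2 (h.2 x 1 (by simpa) (by simpa) hxJ))

theorem IsWeaklyJIdeal.mul_eq_zero_of_mul_eq_zero (h : IsWeaklyJIdeal I) {a b : R}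
    (hab : a * b = 0) (ha : a ∉ Ideal.jacobson ⊥) (hb : b ∉ I) {x y : R} (hx : x ∈ I)
    (hy : y ∈ I) : x * y = 0 := by
  have hax : ∀ z ∈ I, a * z = 0 := by
    intro z hz
    by_contra haz
    have hmem : a * (b + z) ∈ I := by
      rw [mul_add, hab, zero_add]
      exact I.mul_mem_left a hz
    have hne : a * (b + z) ≠ 0 := by rwa [mul_add, hab, zero_add]
    exact hb (by simpa using I.sub_mem (h.2 a (b + z) hmem hne ha) hz)
  have haxJ : a + x ∉ Ideal.jacobson ⊥ := fun hmem =>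
    ha (by simpa using Ideal.sub_mem _ hmem (h.le_jacobson_s6 hx))
  have hxb : x * b = 0 := by
    by_contra hxb
    have heq : (a + x) * b = x * b := by rw [add_mul, hab, zero_add]
    exact hb (h.2 (a + x) b (heq ▸ I.mul_mem_right b hx) (heq ▸ hxb) haxJ)
  by_contra hxy
  have heq : (a + x) * (b + y) = x * y := by
    linear_combination hab + hax y hy + hxb
  have hmem := h.2 (a + x) (b + y) (heq ▸ I.mul_mem_left x hy) (heq ▸ hxy) haxJ
  exact hb (by simpa using I.sub_mem hmem hy)

theorem IsWeaklyJIdeal.isJIdeal_of_mul_self_ne_bot (h : IsWeaklyJIdeal I) (hI : I * I ≠ ⊥) :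
    IsJIdeal I := by
  refine ⟨h.1, fun a b hab ha => ?_⟩
  by_contra hb
  by_cases hab0 : a * b = 0
  · exact hI (le_bot_iff.1 (Ideal.mul_le.2 fun x hx y hy =>
      (Submodule.mem_bot R).2 (h.mul_eq_zero_of_mul_eq_zero hab0 ha hb hx hy)))
  · exact hb (h.2 a b hab hab0 ha)

theorem Ideal.mul_self_ne_bot [IsReduced R] (hI : I ≠ ⊥) : I * I ≠ ⊥ := by
  obtain ⟨x, hx, hx0⟩ := Submodule.exists_mem_ne_zero_of_ne_bot hI
  intro hII
  have hxx : x * x ∈ I * I := Ideal.mul_mem_mul hx hx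
  rw [hII, Submodule.mem_bot, ← sq, sq_eq_zero_iff] at hxx
  exact hx0 hxx

end

theorem stmt6_general {R : Type*} [CommRing R] [IsReduced R] (I : Ideal R)
    (h0 : I ≠ ⊥) : IsWeaklyJIdeal I ↔ IsJIdeal I :=
  ⟨fun h => h.isJIdeal_of_mul_self_ne_bot (Ideal.mul_self_ne_bot h0), IsJIdeal.isWeaklyJIdeal⟩

theorem stmt6 {R : Type*} [CommRing R] [IsReduced R] (I : Ideal R)
    (h0 : I ≠ ⊥) (h1 : I ≠ ⊤) : IsWeaklyJIdeal I ↔ IsJIdeal I :=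
  stmt6_general I h0
end

section
/- Every weakly J-ideal I of a commutative ring R is superfluous; that is, if K is an ideal of R with I + K = R, then K = R. -/
theorem Ideal.eq_top_of_sup_eq_top_of_le_jacobson_bot {R : Type*} [Ring R] {I K : Ideal R}
    (hI : I ≤ Ideal.jacobson ⊥) (h : I ⊔ K = ⊤) : K = ⊤ := by
  by_contra hK
  obtain ⟨M, hM, hKM⟩ := K.exists_le_maximal hK
  have hIM : I ≤ M := hI.trans (sInf_le ⟨bot_le, hM⟩)
  exact hM.ne_top (top_le_iff.mp (h ▸ sup_le hIM hKM))

theorem IsWeaklyJIdeal.le_jacobson_bot {R : Type*} [CommRing R] {I : Ideal R}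
    (h : IsWeaklyJIdeal I) : I ≤ Ideal.jacobson ⊥ := by
  intro x hx
  by_cases hx0 : x = 0
  · exact hx0 ▸ zero_mem _
  by_contra hxJ
  have hone : (1 : R) ∈ I := h.2 x 1 (by rwa [mul_one]) (by rwa [mul_one]) hxJ
  exact h.1 (I.eq_top_of_isUnit_mem hone isUnit_one)

theorem stmt17 {R : Type*} [CommRing R] (I : Ideal R)
    (h : IsWeaklyJIdeal I) : ∀ K : Ideal R, I ⊔ K = ⊤ → K = ⊤ :=
  fun _ => Ideal.eq_top_of_sup_eq_top_of_le_jacobson_bot h.le_jacobson_bot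
end
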